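/- arXiv:2407.09264 — 3 statements merged into one kernel-verified Lean document; each statement's English description precedes it below -/
import Mathlib

section
/- Let G be a group of type FP_m with center Z, and let χ : G → ℝ be a character that does not vanish on Z (i.e. χ(z) ≠ 0 for some z ∈ Z). Then χ ∈ Σ^m(G;ℤ). -/
open Finsupp

variable {G : Type*} [Group G]

/-- Word length with respect to a generating set `X`. -/
noncomputable def wordLength (X : Finset G) (g : G) : ℕ :=
  sInf {n : ℕ | ∃ w : List G, w.length = n ∧ (∀ x ∈ w, x ∈ X ∨ x⁻¹ ∈ X) ∧ w.prod = g}

/-- The left-invariant word metric `d(g,h) = l(g⁻¹h)`. -/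
noncomputable def wordDist (X : Finset G) (g h : G) : ℕ :=
  wordLength X (g⁻¹ * h)

/-- `c` is a chain in `C_q^k(S)`: its support consists of `(q+1)`-tuples of elements of `S`
that are pairwise at distance at most `k`. -/
def VRChain (X : Finset G) (S : Set G) (q k : ℕ) (c : (Fin (q + 1) → G) →₀ ℤ) : Prop :=
  ∀ σ ∈ c.support, (∀ i, σ i ∈ S) ∧ ∀ i j, wordDist X (σ i) (σ j) ≤ k

/-- The simplicial boundary map `∂_{q+1} : ℤ[G^{q+2}] → ℤ[G^{q+1}]`. -/
noncomputable def bnd (q : ℕ) :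
    ((Fin (q + 2) → G) →₀ ℤ) →ₗ[ℤ] ((Fin (q + 1) → G) →₀ ℤ) :=
  Finsupp.lift _ ℤ _
    (fun σ => ∑ i : Fin (q + 2), ((-1 : ℤ) ^ (i : ℕ)) • Finsupp.single (σ ∘ i.succAbove) (1 : ℤ))

/-- The augmentation `ε : ℤ[G] → ℤ` sending every vertex to `1`. -/
noncomputable def aug : ((Fin 1 → G) →₀ ℤ) →ₗ[ℤ] ℤ :=
  Finsupp.lift ℤ ℤ (Fin 1 → G) (fun _ => (1 : ℤ))

/-- Reduced `q`-cycles at scale `k` on `S` bound at scale `l` on `S`. -/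
def BoundsAt (X : Finset G) (S : Set G) : ℕ → ℕ → ℕ → Prop
  | 0, k, l => ∀ z : (Fin 1 → G) →₀ ℤ, VRChain X S 0 k z → aug z = 0 →
      ∃ c : (Fin 2 → G) →₀ ℤ, VRChain X S 1 l c ∧ bnd 0 c = z
  | (q + 1), k, l => ∀ z : (Fin (q + 2) → G) →₀ ℤ, VRChain X S (q + 1) k z → bnd q z = 0 →
      ∃ c : (Fin (q + 3) → G) →₀ ℤ, VRChain X S (q + 2) l c ∧ bnd (q + 1) c = z

/-- `S ⊆ G` is of type `FP_m`. -/
def TypeFP (X : Finset G) (S : Set G) (m : ℕ) : Prop :=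
  ∀ q < m, ∀ k : ℕ, ∃ l ≥ k, BoundsAt X S q k l

/-- A character on `G` is a homomorphism to the additive reals. -/
def IsCharacter (χ : G → ℝ) : Prop :=
  ∀ g h : G, χ (g * h) = χ g + χ h

/-- Simultaneous left translation on chains, making `ℤ[G^{q+1}]` a `ℤG`-module. -/
noncomputable def lTranslate (g : G) (q : ℕ) :
    ((Fin (q + 1) → G) →₀ ℤ) →ₗ[ℤ] ((Fin (q + 1) → G) →₀ ℤ) :=
  Finsupp.lmapDomain ℤ ℤ (fun σ i => g * σ i)

/-- A chain endomorphism of `ℤG`-complexes on `(C_q^k(G))_{q=0,…,m}` extending the identity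
on `ℤ`: each `φ q` maps scale-`k` chains to scale-`k` chains, is `G`-equivariant,
satisfies `ε ∘ φ₀ = ε` and commutes with the boundary maps. -/
def IsChainEndo (X : Finset G) (k m : ℕ)
    (φ : ∀ q : ℕ, ((Fin (q + 1) → G) →₀ ℤ) →ₗ[ℤ] ((Fin (q + 1) → G) →₀ ℤ)) : Prop :=
  (∀ q ≤ m, ∀ c, VRChain X Set.univ q k c → VRChain X Set.univ q k (φ q c)) ∧
  (∀ q ≤ m, ∀ (g : G) (c), VRChain X Set.univ q k c →
    φ q (lTranslate g q c) = lTranslate g q (φ q c)) ∧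
  (∀ c : (Fin 1 → G) →₀ ℤ, VRChain X Set.univ 0 k c → aug (φ 0 c) = aug c) ∧
  (∀ q : ℕ, q + 1 ≤ m → ∀ c : (Fin (q + 2) → G) →₀ ℤ, VRChain X Set.univ (q + 1) k c →
    bnd q (φ (q + 1) c) = φ q (bnd q c))

/-- The valuation of a simplex: `v(σ) = min_i χ(g_i)` (with values in `EReal`). -/
noncomputable def vsimp (χ : G → ℝ) {q : ℕ} (σ : Fin (q + 1) → G) : EReal :=
  ⨅ i, (χ (σ i) : EReal)

/-- The valuation of a chain: the minimum of the valuations of the simplices in its support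
(`⊤` for the zero chain). -/
noncomputable def vchain (χ : G → ℝ) {q : ℕ} (c : (Fin (q + 1) → G) →₀ ℤ) : EReal :=
  ⨅ σ ∈ c.support, vsimp χ σ

/-!
Pick a central `t` with `χ t > 0`. A reduced cycle `z` on `G_χ` bounds some `c` on `G`, and for
large `N` the translate `tᴺ c` lies in `G_χ` and bounds `tᴺ z`. The prism
`P σ = ∑ᵢ (-1)ⁱ (σ₀, …, σᵢ, tσᵢ, …, tσₙ)` satisfies `∂P + P∂ = t - 1`; because `t` is central it
raises the scale by at most `|t| + |t⁻¹|`, and because `χ t > 0` it maps chains on `G_χ` to chains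
on `G_χ`. Hence `tᴺ c - ∑_{j<N} P(tʲ z)` bounds `z` on `G_χ`.
-/

open scoped Pointwise

section WordMetric

variable {X : Finset G}

lemma exists_word_eq (hX : Subgroup.closure (X : Set G) = ⊤) (g : G) :
    ∃ w : List G, (∀ x ∈ w, x ∈ X ∨ x⁻¹ ∈ X) ∧ w.prod = g := by
  have hg : g ∈ Submonoid.closure ((X : Set G) ∪ (X : Set G)⁻¹) := by
    rw [← Subgroup.closure_toSubmonoid, hX]
    trivial
  obtain ⟨w, hw, rfl⟩ := Submonoid.exists_list_of_mem_closure hg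
  exact ⟨w, fun x hx => by simpa using hw x hx, rfl⟩

lemma exists_word_length_eq_wordLength (hX : Subgroup.closure (X : Set G) = ⊤) (g : G) :
    ∃ w : List G, w.length = wordLength X g ∧ (∀ x ∈ w, x ∈ X ∨ x⁻¹ ∈ X) ∧ w.prod = g := by
  obtain ⟨w, hw, hg⟩ := exists_word_eq hX g
  exact Nat.sInf_mem (s := {n | ∃ w : List G, w.length = n ∧ (∀ x ∈ w, x ∈ X ∨ x⁻¹ ∈ X) ∧
    w.prod = g}) ⟨w.length, w, rfl, hw, hg⟩

lemma wordLength_mul_le (hX : Subgroup.closure (X : Set G) = ⊤) (a b : G) :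
    wordLength X (a * b) ≤ wordLength X a + wordLength X b := by
  obtain ⟨u, hu_len, hu, rfl⟩ := exists_word_length_eq_wordLength hX a
  obtain ⟨w, hw_len, hw, rfl⟩ := exists_word_length_eq_wordLength hX b
  rw [← hu_len, ← hw_len, ← List.length_append, ← List.prod_append]
  exact Nat.sInf_le ⟨u ++ w, rfl, fun x hx => (List.mem_append.1 hx).elim (hu x) (hw x), rfl⟩

lemma wordDist_mul_mul (g a b : G) : wordDist X (g * a) (g * b) = wordDist X a b := by
  simp only [wordDist, mul_inv_rev, mul_assoc, inv_mul_cancel_left]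

lemma wordDist_mul_left (g a b : G) : wordDist X (g * a) b = wordDist X a (g⁻¹ * b) := by
  simp only [wordDist, mul_inv_rev, mul_assoc]

lemma wordDist_mul_right_le_of_mem_center (hX : Subgroup.closure (X : Set G) = ⊤) {c : G}
    (hc : c ∈ Subgroup.center G) (a b : G) :
    wordDist X a (c * b) ≤ wordLength X c + wordDist X a b := by
  have e : a⁻¹ * (c * b) = c * (a⁻¹ * b) := by
    rw [← mul_assoc, Subgroup.mem_center_iff.1 hc, mul_assoc]
  unfold wordDist
  exact e ▸ wordLength_mul_le hX c (a⁻¹ * b)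

lemma wordDist_le_of_mem_union_smul (hX : Subgroup.closure (X : Set G) = ⊤)
    {t : G} (ht : t ∈ Subgroup.center G) {V : Set G} {k : ℕ}
    (hV : ∀ a ∈ V, ∀ b ∈ V, wordDist X a b ≤ k) {x y : G} (hx : x ∈ V ∪ t • V)
    (hy : y ∈ V ∪ t • V) :
    wordDist X x y ≤ k + (wordLength X t + wordLength X t⁻¹) := by
  simp only [Set.mem_union, Set.mem_smul_set, smul_eq_mul] at hx hy
  rcases hx with hx | ⟨a, ha, rfl⟩ <;> rcases hy with hy | ⟨b, hb, rfl⟩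
  · exact (hV x hx y hy).trans (by omega)
  · have := wordDist_mul_right_le_of_mem_center hX ht x b
    have := hV x hx b hb
    omega
  · rw [wordDist_mul_left]
    have := wordDist_mul_right_le_of_mem_center hX (inv_mem ht) a y
    have := hV a ha y hy
    omega
  · rw [wordDist_mul_mul]
    exact (hV a ha b hb).trans (by omega)

end WordMetric

section Simplicial

variable {α : Type*}

lemma bnd_single (q : ℕ) (σ : Fin (q + 2) → α) :
    bnd q (single σ 1) = ∑ i : Fin (q + 2), (-1 : ℤ) ^ (i : ℕ) • single (i.removeNth σ) 1 := by
  rw [bnd, lift_apply, sum_single_index (by simp), one_smul]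
  rfl

lemma aug_single (σ : Fin 1 → α) : aug (single σ 1) = 1 := by
  simp [aug]

end Simplicial

lemma lTranslate_single (g : G) (q : ℕ) (σ : Fin (q + 1) → G) (b : ℤ) :
    lTranslate g q (single σ b) = single (fun i => g * σ i) b := by
  simp [lTranslate]

lemma lTranslate_mul (g h : G) (q : ℕ) (c : (Fin (q + 1) → G) →₀ ℤ) :
    lTranslate g q (lTranslate h q c) = lTranslate (g * h) q c := by
  simp only [lTranslate, lmapDomain_apply, ← mapDomain_comp]
  congr 1
  funext σ i
  simp [mul_assoc]

lemma lTranslate_one (q : ℕ) (c : (Fin (q + 1) → G) →₀ ℤ) : lTranslate (1 : G) q c = c := by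
  simp only [lTranslate, lmapDomain_apply, one_mul]
  exact mapDomain_id

lemma bnd_lTranslate (g : G) (q : ℕ) (c : (Fin (q + 2) → G) →₀ ℤ) :
    bnd q (lTranslate g (q + 1) c) = lTranslate g q (bnd q c) := by
  have : bnd q ∘ₗ lTranslate g (q + 1) = lTranslate g q ∘ₗ bnd q :=
    Finsupp.basisSingleOne.ext fun σ => by
      simp only [coe_basisSingleOne, LinearMap.comp_apply, lTranslate_single, bnd_single, map_sum,
        map_zsmul]
      rfl
  exact LinearMap.congr_fun this c

section Cone

variable {α : Type*}

noncomputable def cone (v : α) (n : ℕ) :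
    ((Fin (n + 1) → α) →₀ ℤ) →ₗ[ℤ] ((Fin (n + 2) → α) →₀ ℤ) :=
  lmapDomain ℤ ℤ fun σ => (Fin.cons v σ : Fin (n + 2) → α)

lemma cone_single (v : α) (n : ℕ) (σ : Fin (n + 1) → α) (b : ℤ) :
    cone v n (single σ b) = single (Fin.cons v σ) b := by
  simp [cone]

lemma removeNth_succ_cons {n : ℕ} (v : α) (σ : Fin (n + 1) → α) (i : Fin (n + 1)) :
    i.succ.removeNth (Fin.cons v σ : Fin (n + 2) → α) = Fin.cons v (i.removeNth σ) :=
  Fin.cons_comp_succ_succAbove v σ i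

lemma bnd_cone (v : α) (n : ℕ) (x : (Fin (n + 2) → α) →₀ ℤ) :
    bnd (n + 1) (cone v (n + 1) x) = x - cone v n (bnd n x) := by
  have : bnd (n + 1) ∘ₗ cone v (n + 1) = LinearMap.id - cone v n ∘ₗ bnd n :=
    Finsupp.basisSingleOne.ext fun σ => by
      simp [cone_single, bnd_single, Fin.sum_univ_succ (n := n + 2), removeNth_succ_cons,
        pow_succ, sub_eq_add_neg]
  exact LinearMap.congr_fun this x

lemma bnd_cone_zero (v : α) (x : (Fin 1 → α) →₀ ℤ) :
    bnd 0 (cone v 0 x) = x - aug x • single (fun _ => v) 1 := by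
  have : bnd 0 ∘ₗ cone v 0 = LinearMap.id - (LinearMap.smulRight aug (single (fun _ => v) 1)) :=
    Finsupp.basisSingleOne.ext fun σ => by
      have : Fin.removeNth 1 (Fin.cons v σ : Fin 2 → α) = fun _ => v := by
        funext j
        rw [Fin.fin_one_eq_zero j]
        rfl
      simp [cone_single, bnd_single, Fin.sum_univ_two, aug_single, sub_eq_add_neg, this]
  exact LinearMap.congr_fun this x

lemma cone_ext {M : Type*} [AddCommGroup M] {n : ℕ} {f g : ((Fin (n + 2) → α) →₀ ℤ) →ₗ[ℤ] M}
    (h : ∀ v y, f (cone v n y) = g (cone v n y)) : f = g :=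
  Finsupp.basisSingleOne.ext fun σ => by simpa [cone_single] using h (σ 0) (single (Fin.tail σ) 1)

end Cone

/-- Unfolding the recursion, `P σ = ∑ᵢ (-1)ⁱ (σ₀, …, σᵢ, tσᵢ, …, tσₙ)`, the prism between `σ`
and `tσ`. -/
noncomputable def prismChain (t : G) : (n : ℕ) → (Fin (n + 1) → G) → (Fin (n + 2) → G) →₀ ℤ
  | 0, σ => cone (σ 0) 0 (lTranslate t 0 (single σ 1))
  | n + 1, σ => cone (σ 0) (n + 1) (lTranslate t (n + 1) (single σ 1) - prismChain t n (Fin.tail σ))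

noncomputable def prism (t : G) (n : ℕ) :
    ((Fin (n + 1) → G) →₀ ℤ) →ₗ[ℤ] ((Fin (n + 2) → G) →₀ ℤ) :=
  Finsupp.lift _ ℤ _ (prismChain t n)

lemma prism_single (t : G) (n : ℕ) (σ : Fin (n + 1) → G) :
    prism t n (single σ 1) = prismChain t n σ := by
  simp [prism]

lemma prism_cone (t v : G) (n : ℕ) (y : (Fin (n + 1) → G) →₀ ℤ) :
    prism t (n + 1) (cone v n y) =
      cone v (n + 1) (lTranslate t (n + 1) (cone v n y) - prism t n y) := by
  have : prism t (n + 1) ∘ₗ cone v n =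
      cone v (n + 1) ∘ₗ (lTranslate t (n + 1) ∘ₗ cone v n - prism t n) :=
    Finsupp.basisSingleOne.ext fun σ => by simp [prism_single, cone_single, prismChain]
  exact LinearMap.congr_fun this y

lemma bnd_prism_zero (t : G) (x : (Fin 1 → G) →₀ ℤ) :
    bnd 0 (prism t 0 x) = lTranslate t 0 x - x := by
  have : bnd 0 ∘ₗ prism t 0 = lTranslate t 0 - LinearMap.id :=
    Finsupp.basisSingleOne.ext fun σ => by
      have : (fun _ => σ 0) = σ := funext fun i => by rw [Fin.fin_one_eq_zero i]
      simp [prism_single, prismChain, bnd_cone_zero, lTranslate_single, aug_single, this]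
  exact LinearMap.congr_fun this x

lemma bnd_prism (t : G) : ∀ (n : ℕ) (x : (Fin (n + 2) → G) →₀ ℤ),
    bnd (n + 1) (prism t (n + 1) x) + prism t n (bnd n x) = lTranslate t (n + 1) x - x
  | 0, x => by
    have : bnd 1 ∘ₗ prism t 1 + prism t 0 ∘ₗ bnd 0 = lTranslate t 1 - LinearMap.id :=
      cone_ext fun v y => by
        simp only [LinearMap.add_apply, LinearMap.comp_apply, LinearMap.sub_apply,
          LinearMap.id_apply]
        rw [prism_cone, bnd_cone, bnd_cone_zero, map_sub, bnd_lTranslate, bnd_cone_zero,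
          bnd_prism_zero]
        simp only [map_sub, map_zsmul, prism_single, prismChain]
        abel
    exact LinearMap.congr_fun this x
  | n + 1, x => by
    have : bnd (n + 2) ∘ₗ prism t (n + 2) + prism t (n + 1) ∘ₗ bnd (n + 1) =
        lTranslate t (n + 2) - LinearMap.id :=
      cone_ext fun v y => by
        simp only [LinearMap.add_apply, LinearMap.comp_apply, LinearMap.sub_apply,
          LinearMap.id_apply]
        rw [prism_cone, bnd_cone, bnd_cone, map_sub, bnd_lTranslate, bnd_cone, map_sub (prism _ _),
          prism_cone, eq_sub_of_add_eq (bnd_prism t n y)]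
        simp only [map_sub]
        abel
    exact LinearMap.congr_fun this x

section Support

variable {X : Finset G}

/-- The simplex set `Δ^q_k(S)`; the chain group `C_q^k(S)` is
`supported ℤ ℤ (vrSimplices X S q k)`. -/
def vrSimplices (X : Finset G) (S : Set G) (q k : ℕ) : Set (Fin (q + 1) → G) :=
  {σ | (∀ i, σ i ∈ S) ∧ ∀ i j, wordDist X (σ i) (σ j) ≤ k}

lemma vrChain_iff_mem_supported {S : Set G} {q k : ℕ} {c : (Fin (q + 1) → G) →₀ ℤ} :
    VRChain X S q k c ↔ c ∈ supported ℤ ℤ (vrSimplices X S q k) := by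
  rw [mem_supported]
  rfl

lemma VRChain.univ {S : Set G} {q k : ℕ} {c : (Fin (q + 1) → G) →₀ ℤ} (hc : VRChain X S q k c) :
    VRChain X Set.univ q k c :=
  fun σ hσ => ⟨fun _ => trivial, (hc σ hσ).2⟩

lemma vrSimplices_mono {S S' : Set G} {q k k' : ℕ} (hS : S ⊆ S') (hk : k ≤ k') :
    vrSimplices X S q k ⊆ vrSimplices X S' q k' :=
  fun _ hσ => And.intro (fun i => hS (hσ.1 i)) fun i j => (hσ.2 i j).trans hk

lemma lTranslate_mem_supported {q : ℕ} {g : G} {A B : Set (Fin (q + 1) → G)}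
    (hAB : ∀ σ ∈ A, (fun i => g * σ i) ∈ B) {c : (Fin (q + 1) → G) →₀ ℤ}
    (hc : c ∈ supported ℤ ℤ A) : lTranslate g q c ∈ supported ℤ ℤ B :=
  supported_comap_lmapDomain ℤ ℤ _ B (supported_mono hAB hc)

lemma lTranslate_mem_supported_vrSimplices {S : Set G} {q k : ℕ} {g : G}
    (hS : ∀ a ∈ S, g * a ∈ S) {c : (Fin (q + 1) → G) →₀ ℤ}
    (hc : c ∈ supported ℤ ℤ (vrSimplices X S q k)) :
    lTranslate g q c ∈ supported ℤ ℤ (vrSimplices X S q k) :=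
  lTranslate_mem_supported (fun _ hσ => And.intro (fun i => hS _ (hσ.1 i))
    fun i j => (wordDist_mul_mul g _ _).trans_le (hσ.2 i j)) hc

lemma cone_mem_supported {α : Type*} {n : ℕ} {v : α} {V : Set α} (hv : v ∈ V)
    {y : (Fin (n + 1) → α) →₀ ℤ} (hy : y ∈ supported ℤ ℤ {ρ | Set.range ρ ⊆ V}) :
    cone v n y ∈ supported ℤ ℤ {τ | Set.range τ ⊆ V} :=
  supported_comap_lmapDomain ℤ ℤ _ _ (supported_mono (fun ρ (hρ : Set.range ρ ⊆ V) =>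
    show Set.range (Fin.cons v ρ : Fin (n + 2) → α) ⊆ V by
      rw [Fin.range_cons]; exact Set.insert_subset hv hρ) hy)

lemma range_mul_subset_union_smul {n : ℕ} {t : G} {V : Set G} {σ : Fin (n + 1) → G}
    (hσ : Set.range σ ⊆ V) :
    Set.range (fun i => t * σ i) ⊆ V ∪ t • V := by
  rintro _ ⟨i, rfl⟩
  exact Or.inr (Set.smul_mem_smul_set (hσ ⟨i, rfl⟩))

lemma prismChain_mem_supported (t : G) :
    ∀ (n : ℕ) {V : Set G} {σ : Fin (n + 1) → G}, Set.range σ ⊆ V →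
      prismChain t n σ ∈ supported ℤ ℤ {τ | Set.range τ ⊆ V ∪ t • V}
  | 0, V, σ, hσ => by
    rw [prismChain, lTranslate_single]
    exact cone_mem_supported (V := V ∪ t • V) (Or.inl (hσ ⟨0, rfl⟩))
      (single_mem_supported ℤ _ (range_mul_subset_union_smul hσ))
  | n + 1, V, σ, hσ => by
    rw [prismChain, lTranslate_single]
    refine cone_mem_supported (V := V ∪ t • V) (Or.inl (hσ ⟨0, rfl⟩)) (sub_mem ?_ ?_)
    · exact single_mem_supported ℤ _ (range_mul_subset_union_smul hσ)
    · exact prismChain_mem_supported t n fun _ ⟨i, hi⟩ => hσ ⟨i.succ, hi⟩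

lemma prism_mem_supported (hX : Subgroup.closure (X : Set G) = ⊤) {t : G}
    (ht : t ∈ Subgroup.center G) {S : Set G} (hS : ∀ a ∈ S, t * a ∈ S) {n k : ℕ}
    {c : (Fin (n + 1) → G) →₀ ℤ} (hc : c ∈ supported ℤ ℤ (vrSimplices X S n k)) :
    prism t n c ∈
      supported ℤ ℤ (vrSimplices X S (n + 1) (k + (wordLength X t + wordLength X t⁻¹))) := by
  rw [prism, lift_apply]
  refine Submodule.sum_smul_mem _ _ fun σ hσ => ?_
  obtain ⟨hσS, hσk⟩ := (mem_supported ℤ c).1 hc hσ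
  refine supported_mono (fun τ (hτ : Set.range τ ⊆ _) => And.intro (fun i => ?_) fun i j => ?_)
    (prismChain_mem_supported t n subset_rfl)
  · rcases hτ ⟨i, rfl⟩ with ⟨j, hj⟩ | ⟨_, ⟨j, rfl⟩, hj⟩
    · exact hj ▸ hσS j
    · exact hj ▸ hS _ (hσS j)
  · refine wordDist_le_of_mem_union_smul hX ht ?_ (hτ ⟨i, rfl⟩) (hτ ⟨j, rfl⟩)
    rintro _ ⟨i, rfl⟩ _ ⟨j, rfl⟩
    exact hσk i j

end Support

namespace IsCharacter

variable {χ : G → ℝ}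

lemma map_one (hχ : IsCharacter χ) : χ 1 = 0 := by
  have := hχ 1 1
  rw [one_mul] at this
  linarith

lemma map_inv (hχ : IsCharacter χ) (g : G) : χ g⁻¹ = -χ g := by
  have := hχ g g⁻¹
  rw [mul_inv_cancel, hχ.map_one] at this
  linarith

lemma map_pow_mul (hχ : IsCharacter χ) (t a : G) (n : ℕ) : χ (t ^ n * a) = n * χ t + χ a := by
  induction n with
  | zero => simp
  | succ n ih =>
    rw [pow_succ', mul_assoc, hχ, ih]
    push_cast
    ring

lemma exists_mem_center_pos (hχ : IsCharacter χ) (hZ : ∃ z ∈ Subgroup.center G, χ z ≠ 0) :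
    ∃ t ∈ Subgroup.center G, 0 < χ t := by
  obtain ⟨z, hz, hχz⟩ := hZ
  rcases hχz.lt_or_gt with h | h
  · exact ⟨z⁻¹, inv_mem hz, by rw [hχ.map_inv]; linarith⟩
  · exact ⟨z, hz, h⟩

lemma eventually_nonneg_pow_mul (hχ : IsCharacter χ) {t : G} (ht : 0 < χ t) (a : G) :
    ∀ᶠ N : ℕ in Filter.atTop, 0 ≤ χ (t ^ N * a) := by
  have : Filter.Tendsto (fun N : ℕ => N * χ t + χ a) Filter.atTop Filter.atTop :=
    Filter.tendsto_atTop_add_const_right _ _ (tendsto_natCast_atTop_atTop.atTop_mul_const ht)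
  exact (this.eventually_ge_atTop 0).mono fun N hN => by rwa [hχ.map_pow_mul]

end IsCharacter

section Filling

variable {X : Finset G} {t : G}

lemma bnd_sum_prism_lTranslate_pow {p : ℕ} {z : (Fin (p + 1) → G) →₀ ℤ}
    (hP : ∀ g, bnd p (prism t p (lTranslate g p z)) =
      lTranslate t p (lTranslate g p z) - lTranslate g p z) (N : ℕ) :
    bnd p (∑ j ∈ Finset.range N, prism t p (lTranslate (t ^ j) p z)) =
      lTranslate (t ^ N) p z - z := by
  simp only [map_sum, hP, lTranslate_mul, ← pow_succ']
  rw [Finset.sum_range_sub (fun j => lTranslate (t ^ j) p z), pow_zero, lTranslate_one]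

lemma exists_filling_of_pos {χ : G → ℝ} (hX : Subgroup.closure (X : Set G) = ⊤)
    (ht : t ∈ Subgroup.center G) (hχ : IsCharacter χ) (hχt : 0 < χ t) {p k l : ℕ}
    {z : (Fin (p + 1) → G) →₀ ℤ} (hz : VRChain X {g | 0 ≤ χ g} p k z)
    (hP : ∀ g, bnd p (prism t p (lTranslate g p z)) =
      lTranslate t p (lTranslate g p z) - lTranslate g p z)
    {c : (Fin (p + 2) → G) →₀ ℤ} (hc : VRChain X Set.univ (p + 1) l c) (hbc : bnd p c = z) :
    ∃ c' : (Fin (p + 2) → G) →₀ ℤ,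
      VRChain X {g | 0 ≤ χ g} (p + 1) (max l (k + (wordLength X t + wordLength X t⁻¹))) c' ∧
        bnd p c' = z := by
  obtain ⟨N, hN⟩ := ((Filter.eventually_all_finset c.support).2 fun σ _ =>
    Filter.eventually_all.2 fun i => hχ.eventually_nonneg_pow_mul hχt (σ i)).exists
  have hpow : ∀ j : ℕ, ∀ a ∈ {g : G | 0 ≤ χ g}, t ^ j * a ∈ {g : G | 0 ≤ χ g} :=
    fun j a (ha : 0 ≤ χ a) => show 0 ≤ χ (t ^ j * a) by rw [hχ.map_pow_mul]; positivity
  refine ⟨lTranslate (t ^ N) (p + 1) c - ∑ j ∈ Finset.range N, prism t p (lTranslate (t ^ j) p z),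
    ?_, ?_⟩
  · rw [vrChain_iff_mem_supported] at hz ⊢
    refine sub_mem (lTranslate_mem_supported (A := c.support) (fun σ hσ => And.intro
      (fun i => hN σ hσ i) fun i j => ?_) ((mem_supported ℤ c).2 subset_rfl)) ?_
    · rw [wordDist_mul_mul]
      exact ((hc σ hσ).2 i j).trans (le_max_left _ _)
    · refine Submodule.sum_mem _ fun j _ => supported_mono (vrSimplices_mono subset_rfl
        (le_max_right _ _)) (prism_mem_supported hX ht ?_ (lTranslate_mem_supported_vrSimplices
          (hpow j) hz))
      simpa using hpow 1
  · rw [map_sub, bnd_lTranslate, hbc, bnd_sum_prism_lTranslate_pow hP]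
    abel

end Filling

/-- If `G` is of type `FP_m` and the character `χ` does not vanish on the center of `G`,
then `χ ∈ Σ^m(G;ℤ)`. -/
theorem stmt3 {G : Type*} [Group G] (X : Finset G)
    (hX : Subgroup.closure (X : Set G) = ⊤) (m : ℕ)
    (hFP : TypeFP X Set.univ m)
    (χ : G → ℝ) (hχ : IsCharacter χ)
    (hZ : ∃ z ∈ Subgroup.center G, χ z ≠ 0) :
    TypeFP X {g : G | 0 ≤ χ g} m := by
  obtain ⟨t, ht, hχt⟩ := hχ.exists_mem_center_pos hZ
  intro q hq k
  obtain ⟨l, hlk, hl⟩ := hFP q hq k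
  refine ⟨max l (k + (wordLength X t + wordLength X t⁻¹)), hlk.trans (le_max_left _ _), ?_⟩
  cases q with
  | zero =>
    intro z hz haug
    obtain ⟨c, hc, hbc⟩ := hl z hz.univ haug
    exact exists_filling_of_pos hX ht hχ hχt hz (fun g => bnd_prism_zero t _) hc hbc
  | succ q =>
    intro z hz hcyc
    obtain ⟨c, hc, hbc⟩ := hl z hz.univ hcyc
    refine exists_filling_of_pos hX ht hχ hχt hz (fun g => ?_) hc hbc
    rw [← bnd_prism t q, bnd_lTranslate, hcyc, map_zero, map_zero, add_zero]
end

section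
/- Let 1 → N → G →^π Q → 1 be a short exact sequence of countable groups with N abelian (N identified with its image in G). Then the following are equivalent: (i) there exists a transversal t : Q → G (a map with π∘t = id_Q) which is coarsely Lipschitz; (ii) there exist a group homomorphism α : Q → Aut(N) and a coarse equivalence φ : N ⋊_α Q → G (a map of sets, not necessarily a homomorphism) such that φ(n, 1_Q) = n for all n ∈ N and π(φ(n,x)) = x for all (n,x) ∈ N ⋊_α Q. -/
/-!
Normalise a coarsely Lipschitz transversal `t` so that `t 1 = 1`. Since `N` is abelian,
conjugation by `t x` on `N` depends only on `x`, giving `α : Q →* MulAut N`, and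
`φ (n, x) = n * t x` is a bijection `N ⋊[α] Q → G` with
`(φ p)⁻¹ * φ (p * f) = f.left * (t p.right)⁻¹ * t (p.right * f.right)`; so the coarse
properties of `φ` reduce to those of `t`. Conversely, `φ` restricted to `1 ⋊ Q` is a transversal.
-/

/-- `f` is coarsely Lipschitz (finite-subset version for countable groups). -/
def CoarselyLipschitz {A B : Type*} [Group A] [Group B] (f : A → B) : Prop :=
  ∀ F : Finset A, {b : B | ∃ a a' : A, a⁻¹ * a' ∈ F ∧ b = (f a)⁻¹ * f a'}.Finite

/-- `f` is coarsely injective. -/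
def CoarselyInjective {A B : Type*} [Group A] [Group B] (f : A → B) : Prop :=
  ∀ F' : Finset B, {c : A | ∃ a a' : A, (f a)⁻¹ * f a' ∈ F' ∧ c = a⁻¹ * a'}.Finite

/-- `f` is coarsely surjective. -/
def CoarselySurjective {A B : Type*} [Group A] [Group B] (f : A → B) : Prop :=
  ∃ F' : Finset B, ∀ b : B, ∃ a : A, ∃ b' ∈ F', b = f a * b'

/-- `f` is a coarse equivalence. -/
def CoarseEquivalence {A B : Type*} [Group A] [Group B] (f : A → B) : Prop :=
  CoarselyLipschitz f ∧ CoarselyInjective f ∧ CoarselySurjective f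

open Pointwise

section Coarse

variable {A B C : Type*} [Group A] [Group B] [Group C] {f : A → B}

theorem CoarselyLipschitz.mul_const (hf : CoarselyLipschitz f) (g : B) :
    CoarselyLipschitz fun a ↦ f a * g := by
  intro F
  refine ((hf F).image fun b ↦ g⁻¹ * b * g).subset ?_
  rintro _ ⟨a, a', haa', rfl⟩
  exact ⟨_, ⟨a, a', haa', rfl⟩, by group⟩

theorem CoarselyLipschitz.comp_monoidHom (hf : CoarselyLipschitz f) (h : C →* A) :
    CoarselyLipschitz (f ∘ h) := by
  classical
  intro F
  refine (hf (F.image h)).subset ?_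
  rintro _ ⟨c, c', hcc', rfl⟩
  exact ⟨h c, h c', by simpa using Finset.mem_image_of_mem h hcc', rfl⟩

end Coarse

theorem Subgroup.le_ker_conjNormal {G : Type*} [Group G] (N : Subgroup G) [N.Normal]
    (hab : ∀ a b : N, a * b = b * a) : N ≤ (MulAut.conjNormal : G →* MulAut N).ker := by
  intro g hg
  ext n
  simpa [MulAut.conjNormal_apply, mul_inv_eq_iff_eq_mul] using
    congrArg Subtype.val (hab ⟨g, hg⟩ n)

theorem SemidirectProduct.finite_setOf_left_mem_right_mem {N H : Type*} [Group N] [Group H]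
    {φ : H →* MulAut N} {S : Set N} {T : Set H} (hS : S.Finite) (hT : T.Finite) :
    {p : N ⋊[φ] H | p.left ∈ S ∧ p.right ∈ T}.Finite := by
  refine ((hS.prod hT).preimage (f := fun p : N ⋊[φ] H ↦ (p.left, p.right)) ?_).subset ?_
  · intro p _ q _ h
    exact SemidirectProduct.ext (congrArg Prod.fst h) (congrArg Prod.snd h)
  · exact fun p hp ↦ hp

section MulSection

variable {G Q : Type*} [Group G] [Group Q] {N : Subgroup G} {α : Q →* MulAut N} {t : Q → G}

def mulSection (α : Q →* MulAut N) (t : Q → G) (p : N ⋊[α] Q) : G :=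
  p.left * t p.right

theorem inv_mulSection_mul_mulSection_mul (hα : ∀ x (n : N), (α x n : G) = t x * n * (t x)⁻¹)
    (p f : N ⋊[α] Q) :
    (mulSection α t p)⁻¹ * mulSection α t (p * f) =
      f.left * ((t p.right)⁻¹ * t (p.right * f.right)) := by
  simp only [mulSection, SemidirectProduct.mul_left, SemidirectProduct.mul_right,
    Subgroup.coe_mul, hα, mul_inv_rev]
  group

theorem mulSection_inl (ht : t 1 = 1) (n : N) : mulSection α t ⟨n, 1⟩ = n := by
  simp [mulSection, ht]

theorem map_mulSection {π : G →* Q} (hN : N ≤ π.ker) (ht : Function.RightInverse t π)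
    (p : N ⋊[α] Q) : π (mulSection α t p) = p.right := by
  simp [mulSection, ht p.right, MonoidHom.mem_ker.mp (hN p.left.2)]

theorem coarselyLipschitz_mulSection (hα : ∀ x (n : N), (α x n : G) = t x * n * (t x)⁻¹)
    (ht : CoarselyLipschitz t) : CoarselyLipschitz (mulSection α t) := by
  classical
  intro F
  refine (((F.finite_toSet.image fun f ↦ (f.left : G))).mul (ht (F.image (·.right)))).subset ?_
  rintro _ ⟨p, p', hF, rfl⟩
  rw [← mul_inv_cancel_left p p', inv_mulSection_mul_mulSection_mul hα]
  refine Set.mul_mem_mul ⟨_, hF, rfl⟩ ⟨p.right, p.right * (p⁻¹ * p').right, ?_, rfl⟩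
  simpa using Finset.mem_image_of_mem (·.right) hF

theorem coarselyInjective_mulSection (hα : ∀ x (n : N), (α x n : G) = t x * n * (t x)⁻¹)
    {π : G →* Q} (hN : N ≤ π.ker) (ht : Function.RightInverse t π)
    (htL : CoarselyLipschitz t) : CoarselyInjective (mulSection α t) := by
  classical
  intro F'
  refine (SemidirectProduct.finite_setOf_left_mem_right_mem
    ((F'.finite_toSet.mul (htL (F'.image π)).inv).preimage Subtype.val_injective.injOn)
    (F'.image π).finite_toSet).subset ?_
  rintro _ ⟨p, p', hF', rfl⟩
  set f := p⁻¹ * p'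
  have hfr : f.right ∈ F'.image π := by
    have : π ((mulSection α t p)⁻¹ * mulSection α t p') = f.right := by
      simp [map_mulSection hN ht, f]
    exact this ▸ Finset.mem_image_of_mem π hF'
  have hfl : (f.left : G) = (mulSection α t p)⁻¹ * mulSection α t p' *
      ((t p.right)⁻¹ * t (p.right * f.right))⁻¹ := by
    rw [← mul_inv_cancel_left p p', inv_mulSection_mul_mulSection_mul hα, mul_inv_cancel_right]
  refine ⟨?_, hfr⟩
  rw [Set.mem_preimage, hfl]
  exact Set.mul_mem_mul hF'
    (Set.inv_mem_inv.mpr ⟨p.right, p.right * f.right, by simpa using hfr, rfl⟩)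

theorem coarselySurjective_mulSection {π : G →* Q} (hN : π.ker ≤ N)
    (ht : Function.RightInverse t π) : CoarselySurjective (mulSection α t) := by
  refine ⟨{1}, fun g ↦ ⟨⟨⟨g * (t (π g))⁻¹, hN ?_⟩, π g⟩, 1, Finset.mem_singleton_self 1,
    by simp [mulSection]⟩⟩
  simp [ht (π g)]

end MulSection

/-- A homomorphism because the abelian kernel acts trivially on itself by conjugation. -/
def conjBySection {G Q : Type*} [Group G] [Group Q] {N : Subgroup G} [N.Normal]
    (hab : ∀ a b : N, a * b = b * a) {π : G →* Q} (hker : π.ker ≤ N) {t : Q → G}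
    (ht : Function.RightInverse t π) : Q →* MulAut N :=
  π.liftOfRightInverse t ht ⟨MulAut.conjNormal, hker.trans (N.le_ker_conjNormal hab)⟩

theorem coe_conjBySection_apply {G Q : Type*} [Group G] [Group Q] {N : Subgroup G} [N.Normal]
    (hab : ∀ a b : N, a * b = b * a) {π : G →* Q} (hker : π.ker ≤ N) {t : Q → G}
    (ht : Function.RightInverse t π) (x : Q) (n : N) :
    (conjBySection hab hker ht x n : G) = t x * n * (t x)⁻¹ :=
  rfl

theorem stmt7_general {G Q : Type*} [Group G] [Group Q]
    (N : Subgroup G) [N.Normal]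
    (hab : ∀ a b : N, a * b = b * a)
    (π : G →* Q) (hker : π.ker = N) :
    (∃ t : Q → G, (∀ q, π (t q) = q) ∧ CoarselyLipschitz t) ↔
    (∃ (α : Q →* MulAut N) (φ : N ⋊[α] Q → G),
      CoarseEquivalence φ ∧ (∀ n : N, φ ⟨n, 1⟩ = (n : G)) ∧
      (∀ p : N ⋊[α] Q, π (φ p) = p.right)) := by
  constructor
  · rintro ⟨t₀, ht₀, ht₀L⟩
    set t := fun q ↦ t₀ q * (t₀ 1)⁻¹
    have ht : Function.RightInverse t π := fun q ↦ by simp [t, ht₀]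
    have hα := coe_conjBySection_apply hab hker.le ht
    refine ⟨conjBySection hab hker.le ht, mulSection _ t,
      ⟨coarselyLipschitz_mulSection hα (ht₀L.mul_const _),
        coarselyInjective_mulSection hα hker.ge ht (ht₀L.mul_const _),
        coarselySurjective_mulSection hker.le ht⟩,
      mulSection_inl (mul_inv_cancel _), map_mulSection hker.ge ht⟩
  · rintro ⟨α, φ, ⟨hφL, -, -⟩, -, hφπ⟩
    exact ⟨φ ∘ SemidirectProduct.inr, fun q ↦ hφπ _, hφL.comp_monoidHom _⟩

/-- For a short exact sequence `1 → N → G → Q → 1` of countable groups with `N` abelian,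
a coarsely Lipschitz transversal exists iff there is a coarse equivalence
`N ⋊ Q → G` compatible with the sequence. -/
theorem stmt7 {G Q : Type*} [Group G] [Group Q] [Countable G] [Countable Q]
    (N : Subgroup G) [N.Normal]
    (hab : ∀ a b : N, a * b = b * a)
    (π : G →* Q) (hsurj : Function.Surjective π) (hker : π.ker = N) :
    (∃ t : Q → G, (∀ q, π (t q) = q) ∧ CoarselyLipschitz t) ↔
    (∃ (α : Q →* MulAut N) (φ : N ⋊[α] Q → G),
      CoarseEquivalence φ ∧ (∀ n : N, φ ⟨n, 1⟩ = (n : G)) ∧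
      (∀ p : N ⋊[α] Q, π (φ p) = p.right)) :=
  stmt7_general N hab π hker
end

section
/- Let G be a group with finite generating set and word metric. Then the following are equivalent: (1) G is of type FP_m; (2) there exists a homological connecting vector (n₀,…,n_m) of length m for G; (3) there exist K₀ ≥ 0 and ℤG-linear maps μ_q : ℤ[G^{q+1}] → ℤ[G^{q+1}] for q = 0,…,m with ε∘μ₀ = ε, ∂_q∘μ_q = μ_{q−1}∘∂_q for q = 1,…,m, and the image of μ_q contained in C_q^{K₀}(G) for every q = 0,…,m. -/
open Finsupp

variable {G : Type*} [Group G]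

namespace HCV

open Finsupp

variable {G : Type*} [Group G]

lemma lift_single {α : Type*} {M : Type*} [AddCommGroup M] (f : α → M) (a : α) (n : ℤ) :
    Finsupp.lift M ℤ α f (Finsupp.single a n) = n • f a := by
  rw [Finsupp.lift_apply, Finsupp.sum_single_index]
  simp

lemma single_eq_smul {α : Type*} (a : α) (n : ℤ) :
    (Finsupp.single a n : α →₀ ℤ) = n • Finsupp.single a 1 := by
  rw [Finsupp.smul_single, smul_eq_mul, mul_one]

lemma lhom_ext1 {α M : Type*} [AddCommGroup M] {φ ψ : (α →₀ ℤ) →ₗ[ℤ] M}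
    (h : ∀ a, φ (Finsupp.single a 1) = ψ (Finsupp.single a 1)) : φ = ψ :=
  Finsupp.lhom_ext fun a b => by rw [single_eq_smul, map_smul, map_smul, h]

lemma apply_mem_of_single {α M : Type*} [AddCommGroup M] (p : Submodule ℤ M)
    (φ : (α →₀ ℤ) →ₗ[ℤ] M) (c : α →₀ ℤ)
    (h : ∀ a ∈ c.support, φ (Finsupp.single a 1) ∈ p) : φ c ∈ p := by
  have hc : c = c.sum (fun a n => Finsupp.single a n) := (Finsupp.sum_single c).symm
  rw [hc, map_finsuppSum]
  refine Submodule.sum_mem _ fun a ha => ?_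
  show φ (Finsupp.single a (c a)) ∈ p
  rw [single_eq_smul, map_smul]
  exact Submodule.smul_mem _ _ (h a ha)

lemma apply_congr_support {α M : Type*} [AddCommGroup M] (φ ψ : (α →₀ ℤ) →ₗ[ℤ] M) (c : α →₀ ℤ)
    (h : ∀ a ∈ c.support, φ (Finsupp.single a 1) = ψ (Finsupp.single a 1)) : φ c = ψ c := by
  have := apply_mem_of_single (⊥ : Submodule ℤ M) (φ - ψ) c (fun a ha => by
    simp only [Submodule.mem_bot, LinearMap.sub_apply, sub_eq_zero]
    exact h a ha)
  simpa only [Submodule.mem_bot, LinearMap.sub_apply, sub_eq_zero] using this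

lemma wordDist_self (X : Finset G) (g : G) : wordDist X g g = 0 := by
  have h0 : (0:ℕ) ∈ {n : ℕ | ∃ w : List G, w.length = n ∧
      (∀ x ∈ w, x ∈ X ∨ x⁻¹ ∈ X) ∧ w.prod = g⁻¹ * g} := ⟨[], rfl, by simp, by simp⟩
  exact Nat.le_zero.mp (Nat.sInf_le h0)

lemma wordDist_mul (X : Finset G) (g a b : G) : wordDist X (g*a) (g*b) = wordDist X a b := by
  simp [wordDist, wordLength, mul_assoc]

def GoodS (X : Finset G) (k : ℕ) {q : ℕ} (σ : Fin (q+1) → G) : Prop :=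
  ∀ i j, wordDist X (σ i) (σ j) ≤ k

def nrm {q : ℕ} (σ : Fin (q+1) → G) : Fin (q+1) → G := fun i => (σ 0)⁻¹ * σ i

lemma nrm_smul {q : ℕ} (g : G) (σ : Fin (q+1) → G) : nrm (fun i => g * σ i) = nrm σ := by
  funext i; simp [nrm, mul_assoc]

lemma smul_nrm {q : ℕ} (σ : Fin (q+1) → G) : (fun i => σ 0 * nrm σ i) = σ := by
  funext i; simp [nrm]

lemma nrm_zero {q : ℕ} (σ : Fin (q+1) → G) : nrm σ 0 = 1 := by simp [nrm]

lemma goodS_smul {q : ℕ} (X : Finset G) (k : ℕ) (g : G) (σ : Fin (q+1) → G) :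
    GoodS X k (fun i => g * σ i) ↔ GoodS X k σ := by
  unfold GoodS; simp [wordDist_mul]

lemma goodS_nrm {q : ℕ} (X : Finset G) (k : ℕ) (σ : Fin (q+1) → G) :
    GoodS X k (nrm σ) ↔ GoodS X k σ := by
  unfold GoodS nrm; simp [wordDist_mul (X := X) ((σ 0)⁻¹)]

lemma VRChain_univ {q k : ℕ} (X : Finset G) (c : (Fin (q+1) → G) →₀ ℤ) :
    VRChain X Set.univ q k c ↔ ∀ σ ∈ c.support, GoodS X k σ := by
  unfold VRChain GoodS; simp

noncomputable def vrSub (X : Finset G) (q k : ℕ) : Submodule ℤ ((Fin (q+1) → G) →₀ ℤ) where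
  carrier := {c | VRChain X Set.univ q k c}
  add_mem' := by
    classical
    intro a b ha hb σ hσ
    rcases Finset.mem_union.mp (Finsupp.support_add hσ) with h | h
    exacts [ha σ h, hb σ h]
  zero_mem' := by intro σ hσ; simp at hσ
  smul_mem' := by intro n c hc σ hσ; exact hc σ (Finsupp.support_smul hσ)

lemma mem_vrSub {X : Finset G} {q k : ℕ} {c} : c ∈ vrSub X q k ↔ VRChain X Set.univ q k c :=
  Iff.rfl

lemma VRChain.mono {X : Finset G} {S : Set G} {q k k' : ℕ} {c} (h : VRChain X S q k c)
    (hk : k ≤ k') : VRChain X S q k' c :=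
  fun σ hσ => ⟨(h σ hσ).1, fun i j => le_trans ((h σ hσ).2 i j) hk⟩

lemma VRChain_zero_dim (X : Finset G) (k : ℕ) (c : (Fin 1 → G) →₀ ℤ) :
    VRChain X Set.univ 0 k c := by
  intro σ hσ
  refine ⟨fun i => trivial, fun i j => ?_⟩
  have hij : i = j := Fin.ext (by omega)
  subst hij
  simp [wordDist_self]

lemma VRChain_single {X : Finset G} {q k : ℕ} {σ : Fin (q+1) → G} (h : GoodS X k σ) (n : ℤ) :
    VRChain X Set.univ q k (Finsupp.single σ n) := by
  rw [VRChain_univ]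
  intro ρ hρ
  have := Finsupp.support_single_subset hρ
  rw [Finset.mem_singleton] at this
  subst this; exact h

end HCV
set_option linter.unusedSectionVars false
namespace HCV

open Finsupp

variable {G : Type*} [Group G]

lemma bnd_single {q : ℕ} (τ : Fin (q+2) → G) :
    bnd q (Finsupp.single τ (1:ℤ)) =
      ∑ i : Fin (q+2), ((-1:ℤ)^(i:ℕ)) • Finsupp.single (τ ∘ i.succAbove) (1:ℤ) := by
  rw [bnd, lift_single, one_smul]

lemma aug_single (σ : Fin 1 → G) (n : ℤ) : aug (Finsupp.single σ n) = n := by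
  rw [aug, lift_single]; simp

lemma aug_bnd (c : (Fin 2 → G) →₀ ℤ) : aug (bnd 0 c) = 0 := by
  have h : (aug (G := G)).comp (bnd 0) = 0 := lhom_ext1 fun τ => by
    rw [LinearMap.comp_apply, bnd_single, map_sum]
    simp [aug_single, Fin.sum_univ_two]
  have := LinearMap.congr_fun h c
  simpa using this

lemma lT_single {q : ℕ} (g : G) (σ : Fin (q+1) → G) (n : ℤ) :
    lTranslate g q (Finsupp.single σ n) = Finsupp.single (fun i => g * σ i) n := by
  rw [lTranslate, Finsupp.lmapDomain_apply, Finsupp.mapDomain_single]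

lemma lT_lT {q : ℕ} (g h : G) (c : (Fin (q+1) → G) →₀ ℤ) :
    lTranslate g q (lTranslate h q c) = lTranslate (g*h) q c := by
  have heq : (lTranslate g q).comp (lTranslate h q) = lTranslate (G := G) (g*h) q :=
    lhom_ext1 fun σ => by
      rw [LinearMap.comp_apply, lT_single, lT_single, lT_single]
      simp [mul_assoc]
  exact LinearMap.congr_fun heq c

lemma bnd_lT {q : ℕ} (g : G) (c : (Fin (q+2) → G) →₀ ℤ) :
    bnd q (lTranslate g (q+1) c) = lTranslate g q (bnd q c) := by
  have heq : (bnd q).comp (lTranslate g (q+1)) = (lTranslate g q).comp (bnd (G := G) q) :=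
    lhom_ext1 fun τ => by
      rw [LinearMap.comp_apply, LinearMap.comp_apply, lT_single, bnd_single, bnd_single, map_sum]
      refine Finset.sum_congr rfl fun i _ => ?_
      rw [map_smul, lT_single]
      rfl
  exact LinearMap.congr_fun heq c

lemma aug_lT (g : G) (c : (Fin 1 → G) →₀ ℤ) : aug (lTranslate g 0 c) = aug c := by
  have heq : (aug (G := G)).comp (lTranslate g 0) = aug := lhom_ext1 fun σ => by
    rw [LinearMap.comp_apply, lT_single, aug_single, aug_single]
  exact LinearMap.congr_fun heq c

lemma VRChain_lT {q k : ℕ} {X : Finset G} (g : G) {c} (h : VRChain X Set.univ q k c) :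
    VRChain X Set.univ q k (lTranslate g q c) := by
  classical
  rw [VRChain_univ] at h ⊢
  intro σ hσ
  rw [lTranslate, Finsupp.lmapDomain_apply] at hσ
  obtain ⟨τ, hτ, rfl⟩ := Finset.mem_image.mp (Finsupp.mapDomain_support hσ)
  exact (goodS_smul X k g τ).mpr (h τ hτ)

lemma val_succAbove {m : ℕ} (p : Fin (m+1)) (i : Fin m) :
    ((p.succAbove i) : ℕ) = if (i:ℕ) < (p:ℕ) then (i:ℕ) else (i:ℕ)+1 := by
  rw [Fin.succAbove]
  split_ifs with h1 h2 h2 <;> simp_all [Fin.lt_def]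

lemma succAbove_swap {n : ℕ} (a : Fin (n+3)) (b : Fin (n+2)) (h : (b:ℕ) < (a:ℕ))
    (ha : a ≠ 0) (x : Fin (n+1)) :
    a.succAbove (b.succAbove x) = (b.castSucc).succAbove ((a.pred ha).succAbove x) := by
  have hav : 0 < (a : ℕ) := Nat.lt_of_le_of_lt (Nat.zero_le _) h
  have hx := x.isLt
  apply Fin.ext
  rw [val_succAbove, val_succAbove, val_succAbove, val_succAbove]
  simp only [Fin.coe_castSucc, Fin.coe_pred]
  split_ifs <;> omega

end HCV
set_option linter.unusedSectionVars false
set_option maxHeartbeats 1000000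
namespace HCV

open Finsupp

variable {G : Type*} [Group G]

private def invo (q : ℕ) (p : Fin (q+3) × Fin (q+2)) : Fin (q+3) × Fin (q+2) :=
  if h : (p.2 : ℕ) < (p.1 : ℕ)
  then (p.2.castSucc, p.1.pred (by intro h0; rw [h0] at h; simp at h))
  else (p.2.succ, p.1.castLT (Nat.lt_of_le_of_lt (Nat.le_of_not_lt h) p.2.isLt))

private lemma invo_invo (q : ℕ) (p : Fin (q+3) × Fin (q+2)) : invo q (invo q p) = p := by
  obtain ⟨a, b⟩ := p
  by_cases h : (b : ℕ) < (a : ℕ)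
  · have hane : a ≠ 0 := by intro h0; rw [h0] at h; simp at h
    have e1 : invo q (a, b) = (b.castSucc, a.pred hane) := by rw [invo]; exact dif_pos h
    rw [e1, invo]
    rw [dif_neg (by simp only [Fin.coe_castSucc, Fin.coe_pred]; omega)]
    rw [Prod.mk.injEq]
    exact ⟨Fin.succ_pred _ hane, Fin.castLT_castSucc _ _⟩
  · have halt : (a : ℕ) < q + 2 := Nat.lt_of_le_of_lt (Nat.le_of_not_lt h) b.isLt
    have e1 : invo q (a, b) = (b.succ, a.castLT halt) := by rw [invo]; exact dif_neg h
    rw [e1, invo]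
    rw [dif_pos (by simp only [Fin.coe_castLT, Fin.val_succ]; omega)]
    rw [Prod.mk.injEq]
    exact ⟨Fin.castSucc_castLT _ _, Fin.pred_succ _⟩

private lemma invo_ne (q : ℕ) (p : Fin (q+3) × Fin (q+2)) : invo q p ≠ p := by
  obtain ⟨a, b⟩ := p
  intro hcon
  rw [invo] at hcon
  by_cases h : (b : ℕ) < (a : ℕ)
  · rw [dif_pos h] at hcon
    have := congr_arg (fun p : Fin (q+3) × Fin (q+2) => (p.1 : ℕ)) hcon
    simp only [Fin.coe_castSucc] at this
    omega
  · rw [dif_neg h] at hcon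
    have := congr_arg (fun p : Fin (q+3) × Fin (q+2) => (p.1 : ℕ)) hcon
    simp only [Fin.val_succ] at this
    omega

lemma bnd_bnd (q : ℕ) (c : (Fin (q+3) → G) →₀ ℤ) : bnd q (bnd (q+1) c) = 0 := by
  have heq : (bnd q).comp (bnd (q+1)) =
      (0 : ((Fin (q+3) → G) →₀ ℤ) →ₗ[ℤ] ((Fin (q+1) → G) →₀ ℤ)) := by
    refine lhom_ext1 fun τ => ?_
    rw [LinearMap.comp_apply, bnd_single, map_sum]
    simp only [map_smul, bnd_single, Finset.smul_sum, smul_smul]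
    rw [← Finset.sum_product']
    rw [LinearMap.zero_apply]
    refine Finset.sum_ninvolution (invo q) ?_ ?_ (fun p => Finset.mem_univ _) (invo_invo q)
    · rintro ⟨a, b⟩
      by_cases h : (b : ℕ) < (a : ℕ)
      · have hane : a ≠ 0 := by rintro rfl; exact absurd h (by simp)
        have e1 : invo q (a, b) = (b.castSucc, a.pred hane) := by rw [invo]; exact dif_pos h
        rw [e1]
        dsimp only
        have hface : (τ ∘ a.succAbove) ∘ b.succAbove
            = (τ ∘ (b.castSucc).succAbove) ∘ ((a.pred hane).succAbove) := by
          funext x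
          exact congrArg τ (succAbove_swap a b h hane x)
        have hsign : ((-1:ℤ)^((b.castSucc : Fin (q+3)):ℕ) * (-1:ℤ)^((a.pred hane : Fin (q+2)):ℕ))
            = -((-1:ℤ)^(a:ℕ) * (-1:ℤ)^(b:ℕ)) := by
          simp only [Fin.coe_castSucc, Fin.coe_pred]
          obtain ⟨n, hn⟩ : ∃ n, (a:ℕ) = n + 1 := ⟨(a:ℕ)-1, by omega⟩
          rw [hn, Nat.add_sub_cancel, pow_succ]
          ring
        rw [hface, hsign, neg_smul, add_neg_cancel]
      · have hle : (a : ℕ) ≤ (b : ℕ) := Nat.le_of_not_lt h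
        have halt : (a : ℕ) < q + 2 := Nat.lt_of_le_of_lt hle b.isLt
        have e1 : invo q (a, b) = (b.succ, a.castLT halt) := by rw [invo]; exact dif_neg h
        rw [e1]
        dsimp only
        have hlt2 : ((a.castLT halt : Fin (q+2)) : ℕ) < ((b.succ : Fin (q+3)) : ℕ) := by
          simp only [Fin.coe_castLT, Fin.val_succ]; omega
        have hface : (τ ∘ b.succ.succAbove) ∘ (a.castLT halt).succAbove
            = (τ ∘ a.succAbove) ∘ b.succAbove := by
          funext x
          have := succAbove_swap b.succ (a.castLT halt) hlt2 (Fin.succ_ne_zero b) x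
          rw [Fin.castSucc_castLT, Fin.pred_succ] at this
          exact congrArg τ this
        have hsign : ((-1:ℤ)^((b.succ : Fin (q+3)):ℕ) * (-1:ℤ)^((a.castLT halt : Fin (q+2)):ℕ))
            = -((-1:ℤ)^(a:ℕ) * (-1:ℤ)^(b:ℕ)) := by
          simp only [Fin.val_succ, Fin.coe_castLT]
          rw [pow_succ]
          ring
        rw [hface, hsign, neg_smul, add_neg_cancel]
    · intro p _
      exact invo_ne q p
  have := LinearMap.congr_fun heq c
  simpa using this

end HCV
set_option linter.unusedSectionVars false
namespace HCV

open Finsupp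

variable {G : Type*} [Group G]

noncomputable def cne (q : ℕ) : ((Fin (q+1) → G) →₀ ℤ) →ₗ[ℤ] ((Fin (q+2) → G) →₀ ℤ) :=
  Finsupp.lift _ ℤ _ (fun σ => Finsupp.single (Fin.cons 1 σ) (1:ℤ))

lemma cne_single {q : ℕ} (σ : Fin (q+1) → G) :
    cne q (Finsupp.single σ (1:ℤ)) = Finsupp.single (Fin.cons 1 σ) 1 := by
  rw [cne, lift_single, one_smul]

lemma cons_comp_zero {n : ℕ} (σ : Fin (n+1) → G) :
    (Fin.cons 1 σ : Fin (n+2) → G) ∘ (0 : Fin (n+2)).succAbove = σ := by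
  funext x
  show (Fin.cons 1 σ : Fin (n+2) → G) ((0 : Fin (n+2)).succAbove x) = σ x
  rw [Fin.zero_succAbove, Fin.cons_succ]

lemma cons_comp_succ {n : ℕ} (σ : Fin (n+1) → G) (j : Fin (n+1)) :
    (Fin.cons 1 σ : Fin (n+2) → G) ∘ (j.succ).succAbove = Fin.cons 1 (σ ∘ j.succAbove) := by
  funext x
  induction x using Fin.cases with
  | zero =>
    show (Fin.cons 1 σ : Fin (n+2) → G) ((j.succ).succAbove 0) = _
    rw [Fin.succ_succAbove_zero, Fin.cons_zero]
    rw [Fin.cons_zero]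
  | succ y =>
    show (Fin.cons 1 σ : Fin (n+2) → G) ((j.succ).succAbove y.succ) = _
    rw [Fin.succ_succAbove_succ, Fin.cons_succ]
    rw [Fin.cons_succ]
    rfl

lemma bnd_cne_succ (q : ℕ) (c : (Fin (q+2) → G) →₀ ℤ) :
    bnd (q+1) (cne (q+1) c) = c - cne q (bnd q c) := by
  have heq : (bnd (q+1)).comp (cne (q+1)) =
      LinearMap.id - (cne q).comp (bnd (G := G) q) := by
    refine lhom_ext1 fun σ => ?_
    rw [LinearMap.comp_apply, cne_single, bnd_single, Fin.sum_univ_succ]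
    rw [LinearMap.sub_apply, LinearMap.id_apply, LinearMap.comp_apply, bnd_single, map_sum]
    rw [cons_comp_zero]
    simp only [Fin.val_zero, pow_zero, one_smul, Fin.val_succ, map_smul, cne_single,
      cons_comp_succ, pow_succ]
    rw [sub_eq_add_neg, ← Finset.sum_neg_distrib]
    congr 1
    refine Finset.sum_congr rfl fun j _ => ?_
    rw [← neg_smul]
    ring_nf
  exact LinearMap.congr_fun heq c

lemma bnd_cne_zero (c : (Fin 1 → G) →₀ ℤ) :
    bnd 0 (cne 0 c) = c - aug c • Finsupp.single (fun _ => (1:G)) 1 := by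
  have heq : (bnd 0).comp (cne 0) =
      LinearMap.id - (aug (G := G)).smulRight (Finsupp.single (fun _ => (1:G)) 1) := by
    refine lhom_ext1 fun σ => ?_
    rw [LinearMap.comp_apply, cne_single, bnd_single, Fin.sum_univ_succ, Fin.sum_univ_succ]
    rw [cons_comp_zero]
    rw [LinearMap.sub_apply, LinearMap.id_apply, LinearMap.smulRight_apply, aug_single]
    have h1 : (Fin.cons 1 σ : Fin 2 → G) ∘ ((0 : Fin 1).succ).succAbove = (fun _ => (1:G)) := by
      rw [cons_comp_succ]
      funext x
      have hx : x = 0 := Fin.ext (by omega)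
      rw [hx, Fin.cons_zero]
    have h2 : ∀ x : Fin 0, False := fun x => absurd x.isLt (by omega)
    simp only [Finset.univ_eq_empty, Finset.sum_empty, add_zero]
    rw [h1]
    simp [sub_eq_add_neg]
  exact LinearMap.congr_fun heq c

def IsRedCycle : (q : ℕ) → ((Fin (q+1) → G) →₀ ℤ) → Prop
  | 0, z => aug z = 0
  | (q+1), z => bnd q z = 0

lemma isRedCycle_bnd : ∀ (q : ℕ) (c : (Fin (q+2) → G) →₀ ℤ), IsRedCycle q (bnd q c)
  | 0, c => aug_bnd c
  | (q+1), c => bnd_bnd q c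

lemma bnd_cne_red {q : ℕ} {z : (Fin (q+1) → G) →₀ ℤ} (hz : IsRedCycle q z) :
    bnd q (cne q z) = z := by
  cases q with
  | zero =>
    have haz : aug z = 0 := hz
    rw [bnd_cne_zero, haz, zero_smul, sub_zero]
  | succ q =>
    have hbz : bnd q z = 0 := hz
    rw [bnd_cne_succ, hbz, map_zero, sub_zero]

lemma boundsAt_iff (X : Finset G) (S : Set G) (q k l : ℕ) :
    BoundsAt X S q k l ↔ ∀ z : (Fin (q+1) → G) →₀ ℤ, VRChain X S q k z → IsRedCycle q z →
      ∃ c : (Fin (q+2) → G) →₀ ℤ, VRChain X S (q+1) l c ∧ bnd q c = z := by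
  cases q <;> exact Iff.rfl

lemma exists_scale {q : ℕ} (X : Finset G) (c : (Fin (q+1) → G) →₀ ℤ) :
    ∃ k, VRChain X Set.univ q k c := by
  refine ⟨c.support.sup (fun σ => Finset.univ.sup
    (fun p : Fin (q+1) × Fin (q+1) => wordDist X (σ p.1) (σ p.2))), fun σ hσ => ?_⟩
  refine ⟨fun _ => trivial, fun i j => ?_⟩
  exact le_trans (Finset.le_sup (f := fun p : Fin (q+1) × Fin (q+1) =>
    wordDist X (σ p.1) (σ p.2)) (Finset.mem_univ (i, j)))
    (Finset.le_sup (f := fun σ : Fin (q+1) → G => Finset.univ.sup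
      (fun p : Fin (q+1) × Fin (q+1) => wordDist X (σ p.1) (σ p.2))) hσ)

noncomputable def scaleOf {q : ℕ} (X : Finset G) (c : (Fin (q+1) → G) →₀ ℤ) : ℕ :=
  Classical.choose (exists_scale X c)

lemma scaleOf_spec {q : ℕ} (X : Finset G) (c : (Fin (q+1) → G) →₀ ℤ) :
    VRChain X Set.univ q (scaleOf X c) c :=
  Classical.choose_spec (exists_scale X c)

lemma goodS_comp {q k : ℕ} {X : Finset G} {τ : Fin (q+2) → G} (h : GoodS X k τ)
    (f : Fin (q+1) → Fin (q+2)) : GoodS X k (τ ∘ f) :=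
  fun i j => h (f i) (f j)

lemma VRChain_bnd {q k : ℕ} {X : Finset G} {c : (Fin (q+2) → G) →₀ ℤ}
    (h : VRChain X Set.univ (q+1) k c) : VRChain X Set.univ q k (bnd q c) := by
  rw [VRChain_univ] at h
  rw [← mem_vrSub]
  refine apply_mem_of_single _ _ _ (fun τ hτ => ?_)
  rw [bnd_single]
  refine Submodule.sum_mem _ fun i _ => Submodule.smul_mem _ _ ?_
  rw [mem_vrSub]
  exact VRChain_single (goodS_comp (h τ hτ) _) 1

end HCV
set_option linter.unusedSectionVars false
namespace HCV

open Finsupp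

variable {G : Type*} [Group G]

lemma wordLength_nonempty {X : Finset G} (hX : Subgroup.closure (X : Set G) = ⊤) (g : G) :
    {n : ℕ | ∃ w : List G, w.length = n ∧ (∀ x ∈ w, x ∈ X ∨ x⁻¹ ∈ X) ∧ w.prod = g}.Nonempty := by
  have hg : g ∈ Submonoid.closure ((X : Set G) ∪ ((X : Set G))⁻¹) := by
    rw [← Subgroup.closure_toSubmonoid]
    rw [hX]
    trivial
  obtain ⟨w, hw, hprod⟩ := Submonoid.exists_list_of_mem_closure hg
  refine ⟨w.length, w, rfl, fun x hx => ?_, hprod⟩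
  rcases hw x hx with h | h
  · exact Or.inl h
  · exact Or.inr (Set.mem_inv.mp h)

lemma wordLength_witness {X : Finset G} (hX : Subgroup.closure (X : Set G) = ⊤) (g : G) :
    ∃ w : List G, w.length = wordLength X g ∧ (∀ x ∈ w, x ∈ X ∨ x⁻¹ ∈ X) ∧ w.prod = g :=
  Nat.sInf_mem (wordLength_nonempty hX g)

lemma ball_finite {X : Finset G} (hX : Subgroup.closure (X : Set G) = ⊤) (k : ℕ) :
    {g : G | wordLength X g ≤ k}.Finite := by
  classical
  have key : ∀ k : ℕ, {g : G | ∃ w : List G, w.length ≤ k ∧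
      (∀ x ∈ w, x ∈ X ∨ x⁻¹ ∈ X) ∧ w.prod = g}.Finite := by
    intro k
    induction k with
    | zero =>
      refine Set.Finite.subset (Set.finite_singleton 1) ?_
      rintro g ⟨w, hl, -, rfl⟩
      have : w = [] := List.eq_nil_of_length_eq_zero (Nat.le_zero.mp hl)
      simp [this]
    | succ k ih =>
      have hsub : {g : G | ∃ w : List G, w.length ≤ k + 1 ∧
          (∀ x ∈ w, x ∈ X ∨ x⁻¹ ∈ X) ∧ w.prod = g} ⊆
          {g : G | ∃ w : List G, w.length ≤ k ∧ (∀ x ∈ w, x ∈ X ∨ x⁻¹ ∈ X) ∧ w.prod = g} ∪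
          ⋃ x ∈ ((X : Set G) ∪ ((X : Set G))⁻¹),
            (fun g => x * g) '' {g : G | ∃ w : List G, w.length ≤ k ∧
              (∀ x ∈ w, x ∈ X ∨ x⁻¹ ∈ X) ∧ w.prod = g} := by
        rintro g ⟨w, hl, hmem, rfl⟩
        cases w with
        | nil => exact Or.inl ⟨[], by simp⟩
        | cons x w' =>
          have hx : x ∈ ((X : Set G) ∪ ((X : Set G))⁻¹) := by
            rcases hmem x (by simp) with h | h
            · exact Or.inl h
            · exact Or.inr (Set.mem_inv.mpr h)
          exact Or.inr (Set.mem_biUnion hx ⟨w'.prod,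
            ⟨w', by simpa using hl, fun y hy => hmem y (List.mem_cons_of_mem _ hy), rfl⟩,
            by simp [List.prod_cons]⟩)
      refine Set.Finite.subset (ih.union ?_) hsub
      refine Set.Finite.biUnion (X.finite_toSet.union X.finite_toSet.inv) fun x _ => ih.image _
  refine (key k).subset ?_
  intro g hg
  obtain ⟨w, hlen, hmem, hprod⟩ := wordLength_witness hX g
  exact ⟨w, by rw [hlen]; exact hg, hmem, hprod⟩

lemma rep_finite {X : Finset G} (hX : Subgroup.closure (X : Set G) = ⊤) (q k : ℕ) :
    {τ : Fin (q+1) → G | τ 0 = 1 ∧ GoodS X k τ}.Finite := by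
  refine Set.Finite.subset (Set.Finite.pi (fun i : Fin (q+1) => ball_finite hX k)) ?_
  rintro τ ⟨h0, hG⟩
  intro i _
  have hd := hG 0 i
  rw [h0] at hd
  simpa [wordDist] using hd

end HCV
set_option linter.unusedSectionVars false
namespace HCV

open Finsupp

variable {G : Type*} [Group G]

lemma isRedCycle_zero : ∀ q : ℕ, IsRedCycle q (0 : (Fin (q+1) → G) →₀ ℤ)
  | 0 => map_zero aug
  | (q+1) => map_zero (bnd q)

structure MuD (X : Finset G) (nv : ℕ → ℕ) (q : ℕ) where
  μ : ((Fin (q+1) → G) →₀ ℤ) →ₗ[ℤ] ((Fin (q+1) → G) →₀ ℤ)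
  equi : ∀ (g : G) (c), μ (lTranslate g q c) = lTranslate g q (μ c)
  scale : ∀ c, VRChain X Set.univ q (nv q) (μ c)
  red : ∀ c : (Fin (q+2) → G) →₀ ℤ, IsRedCycle q (μ (bnd q c))

noncomputable def muBase (X : Finset G) (nv : ℕ → ℕ) : MuD X nv 0 where
  μ := LinearMap.id
  equi := fun g c => rfl
  scale := fun c => VRChain_zero_dim X _ _
  red := fun c => isRedCycle_bnd 0 c

noncomputable def zeroMuD (X : Finset G) (nv : ℕ → ℕ) (q : ℕ) : MuD X nv (q+1) where
  μ := 0
  equi := fun g c => by simp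
  scale := fun c => (vrSub X (q+1) (nv (q+1))).zero_mem
  red := fun c => by
    show IsRedCycle (q+1) ((0 : ((Fin (q+2) → G) →₀ ℤ) →ₗ[ℤ] _) (bnd (q+1) c))
    rw [LinearMap.zero_apply]
    exact isRedCycle_zero (q+1)

variable (X : Finset G) (nv : ℕ → ℕ) (q : ℕ)

noncomputable def muFill (hB : BoundsAt X Set.univ q (nv q) (nv (q+1))) (prev : MuD X nv q)
    (ρ : Fin (q+2) → G) : (Fin (q+2) → G) →₀ ℤ :=
  Classical.choose ((boundsAt_iff X Set.univ q (nv q) (nv (q+1))).mp hB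
    (prev.μ (bnd q (Finsupp.single ρ 1))) (prev.scale _) (prev.red _))

lemma muFill_spec (hB : BoundsAt X Set.univ q (nv q) (nv (q+1))) (prev : MuD X nv q)
    (ρ : Fin (q+2) → G) :
    VRChain X Set.univ (q+1) (nv (q+1)) (muFill X nv q hB prev ρ) ∧
      bnd q (muFill X nv q hB prev ρ) = prev.μ (bnd q (Finsupp.single ρ 1)) :=
  Classical.choose_spec ((boundsAt_iff X Set.univ q (nv q) (nv (q+1))).mp hB
    (prev.μ (bnd q (Finsupp.single ρ 1))) (prev.scale _) (prev.red _))

noncomputable def muNextMap (hB : BoundsAt X Set.univ q (nv q) (nv (q+1)))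
    (prev : MuD X nv q) :
    ((Fin (q+2) → G) →₀ ℤ) →ₗ[ℤ] ((Fin (q+2) → G) →₀ ℤ) :=
  Finsupp.lift _ ℤ _ (fun τ => lTranslate (τ 0) (q+1) (muFill X nv q hB prev (nrm τ)))

lemma muNext_single (hB : BoundsAt X Set.univ q (nv q) (nv (q+1))) (prev : MuD X nv q)
    (τ : Fin (q+2) → G) :
    muNextMap X nv q hB prev (Finsupp.single τ 1) =
      lTranslate (τ 0) (q+1) (muFill X nv q hB prev (nrm τ)) := by
  rw [muNextMap, lift_single, one_smul]

lemma muNext_compat (hB : BoundsAt X Set.univ q (nv q) (nv (q+1))) (prev : MuD X nv q)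
    (c : (Fin (q+2) → G) →₀ ℤ) :
    bnd q (muNextMap X nv q hB prev c) = prev.μ (bnd q c) := by
  have heq : (bnd q).comp (muNextMap X nv q hB prev) = prev.μ.comp (bnd q) := by
    refine lhom_ext1 fun τ => ?_
    rw [LinearMap.comp_apply, LinearMap.comp_apply, muNext_single, bnd_lT,
      (muFill_spec X nv q hB prev (nrm τ)).2, ← prev.equi, ← bnd_lT, lT_single]
    rw [smul_nrm τ]
  exact LinearMap.congr_fun heq c

noncomputable def muStep (hB : BoundsAt X Set.univ q (nv q) (nv (q+1)))
    (prev : MuD X nv q) : MuD X nv (q+1) where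
  μ := muNextMap X nv q hB prev
  equi := by
    intro g c
    have heq : (muNextMap X nv q hB prev).comp (lTranslate g (q+1)) =
        (lTranslate g (q+1)).comp (muNextMap X nv q hB prev) := by
      refine lhom_ext1 fun τ => ?_
      rw [LinearMap.comp_apply, LinearMap.comp_apply, lT_single, muNext_single, muNext_single]
      rw [nrm_smul, ← lT_lT]
    exact LinearMap.congr_fun heq c
  scale := by
    intro c
    rw [← mem_vrSub]
    refine apply_mem_of_single _ _ _ fun τ _ => ?_
    rw [muNext_single, mem_vrSub]
    exact VRChain_lT _ (muFill_spec X nv q hB prev (nrm τ)).1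
  red := by
    intro c
    show IsRedCycle (q+1) (muNextMap X nv q hB prev (bnd (q+1) c))
    show bnd q (muNextMap X nv q hB prev (bnd (q+1) c)) = 0
    rw [muNext_compat, bnd_bnd, map_zero]

variable (m : ℕ)

noncomputable def muSeq (hnv : ∀ q < m, BoundsAt X Set.univ q (nv q) (nv (q+1))) :
    ∀ q, MuD X nv q
  | 0 => muBase X nv
  | (q+1) =>
    if h : q < m then muStep X nv q (hnv q h) (muSeq hnv q) else zeroMuD X nv q

lemma muSeq_zero (hnv : ∀ q < m, BoundsAt X Set.univ q (nv q) (nv (q+1))) :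
    muSeq X nv m hnv 0 = muBase X nv := by
  rw [muSeq]

lemma muSeq_compat (hnv : ∀ q < m, BoundsAt X Set.univ q (nv q) (nv (q+1)))
    (h : q < m) (c : (Fin (q+2) → G) →₀ ℤ) :
    bnd q ((muSeq X nv m hnv (q+1)).μ c) = (muSeq X nv m hnv q).μ (bnd q c) := by
  have e : muSeq X nv m hnv (q+1) = muStep X nv q (hnv q h) (muSeq X nv m hnv q) := by
    rw [muSeq, dif_pos h]
  rw [e]
  exact muNext_compat X nv q (hnv q h) (muSeq X nv m hnv q) c

lemma connvec_to_endo {X : Finset G} {m : ℕ} (nv : ℕ → ℕ)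
    (hnv : ∀ q < m, BoundsAt X Set.univ q (nv q) (nv (q+1))) :
    ∃ (K₀ : ℕ) (μ : ∀ q : ℕ, ((Fin (q + 1) → G) →₀ ℤ) →ₗ[ℤ] ((Fin (q + 1) → G) →₀ ℤ)),
      (∀ q ≤ m, ∀ (g : G) (c), μ q (lTranslate g q c) = lTranslate g q (μ q c)) ∧
      (∀ c : (Fin 1 → G) →₀ ℤ, aug (μ 0 c) = aug c) ∧
      (∀ q : ℕ, q + 1 ≤ m → ∀ c : (Fin (q + 2) → G) →₀ ℤ,
        bnd q (μ (q + 1) c) = μ q (bnd q c)) ∧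
      (∀ q ≤ m, ∀ c, VRChain X Set.univ q K₀ (μ q c)) := by
  refine ⟨(Finset.range (m+1)).sup nv, fun q => (muSeq X nv m hnv q).μ, ?_, ?_, ?_, ?_⟩
  · exact fun q _ g c => (muSeq X nv m hnv q).equi g c
  · intro c
    show aug ((muSeq X nv m hnv 0).μ c) = aug c
    rw [muSeq_zero]
    rfl
  · intro q hq c
    exact muSeq_compat X nv q m hnv (by omega) c
  · intro q hq c
    refine VRChain.mono ((muSeq X nv m hnv q).scale c) ?_
    exact Finset.le_sup (Finset.mem_range.mpr (by omega))

end HCV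
set_option linter.unusedSectionVars false
set_option maxHeartbeats 1000000
namespace HCV

open Finsupp

open scoped Classical

variable {G : Type*} [Group G]

structure HD (X : Finset G) (μ : ∀ q : ℕ, ((Fin (q+1) → G) →₀ ℤ) →ₗ[ℤ] ((Fin (q+1) → G) →₀ ℤ))
    (k : ℕ) (j : ℕ) where
  H : ((Fin (j+1) → G) →₀ ℤ) →ₗ[ℤ] ((Fin (j+2) → G) →₀ ℤ)
  equi : ∀ (g : G) (c), H (lTranslate g j c) = lTranslate g (j+1) (H c)
  l : ℕ
  scale : ∀ c, VRChain X Set.univ j k c → VRChain X Set.univ (j+1) l (H c)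

def Iden (X : Finset G) (μ : ∀ q : ℕ, ((Fin (q+1) → G) →₀ ℤ) →ₗ[ℤ] ((Fin (q+1) → G) →₀ ℤ))
    (k j : ℕ) (H : ((Fin (j+1) → G) →₀ ℤ) →ₗ[ℤ] ((Fin (j+2) → G) →₀ ℤ)) : Prop :=
  ∀ z, VRChain X Set.univ j k z → IsRedCycle j z → bnd j (H z) = z - μ j z

variable (X : Finset G) (μ : ∀ q : ℕ, ((Fin (q+1) → G) →₀ ℤ) →ₗ[ℤ] ((Fin (q+1) → G) →₀ ℤ))
  (k : ℕ)

noncomputable def hdC1 : (Fin 2 → G) →₀ ℤ :=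
  cne 0 (Finsupp.single (fun _ => (1:G)) 1 - μ 0 (Finsupp.single (fun _ => (1:G)) 1))

noncomputable def hdBase : HD X μ k 0 where
  H := Finsupp.lift _ ℤ _ (fun σ : Fin 1 → G => lTranslate (σ 0) 1 (hdC1 μ))
  equi := by
    intro g c
    have heq : (Finsupp.lift _ ℤ _ (fun σ : Fin 1 → G => lTranslate (σ 0) 1 (hdC1 μ))).comp
        (lTranslate g 0) = (lTranslate g 1).comp
          (Finsupp.lift _ ℤ _ (fun σ : Fin 1 → G => lTranslate (σ 0) 1 (hdC1 μ))) := by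
      refine lhom_ext1 fun σ => ?_
      rw [LinearMap.comp_apply, LinearMap.comp_apply, lT_single, lift_single, lift_single,
        one_smul, one_smul, ← lT_lT]
    exact LinearMap.congr_fun heq c
  l := scaleOf X (hdC1 μ)
  scale := by
    intro c _
    rw [← mem_vrSub]
    refine apply_mem_of_single _ _ _ fun σ _ => ?_
    rw [lift_single, one_smul, mem_vrSub]
    exact VRChain_lT _ (scaleOf_spec X (hdC1 μ))

lemma hdBase_iden (haug : ∀ c : (Fin 1 → G) →₀ ℤ, aug (μ 0 c) = aug c)
    (hequi0 : ∀ (g : G) (c), μ 0 (lTranslate g 0 c) = lTranslate g 0 (μ 0 c)) :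
    ∀ z, bnd 0 ((hdBase X μ k).H z) = z - μ 0 z := by
  intro z
  have heq : (bnd 0).comp (hdBase X μ k).H = LinearMap.id - μ 0 := by
    refine lhom_ext1 fun σ => ?_
    have hone : (fun i : Fin 1 => σ 0 * (fun _ => (1:G)) i) = σ := by
      funext i
      have hi : i = 0 := Fin.ext (by omega)
      rw [hi]
      exact mul_one (σ 0)
    rw [LinearMap.comp_apply]
    show bnd 0 ((hdBase X μ k).H (Finsupp.single σ 1)) = _
    have hH : (hdBase X μ k).H (Finsupp.single σ 1) = lTranslate (σ 0) 1 (hdC1 μ) := by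
      show (Finsupp.lift _ ℤ _ (fun σ : Fin 1 → G => lTranslate (σ 0) 1 (hdC1 μ)))
        (Finsupp.single σ 1) = _
      rw [lift_single, one_smul]
    rw [hH, bnd_lT, hdC1, bnd_cne_zero]
    have haug0 : aug (Finsupp.single (fun _ => (1:G)) (1:ℤ) -
        μ 0 (Finsupp.single (fun _ => (1:G)) 1)) = 0 := by
      rw [map_sub, haug, sub_self]
    rw [haug0, zero_smul, sub_zero, map_sub, lT_single, hone, ← hequi0, lT_single, hone]
    rfl
  have := LinearMap.congr_fun heq z
  rw [LinearMap.comp_apply] at this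
  rw [this]
  rfl

variable (j : ℕ)

noncomputable def hdY (prev : HD X μ k j) (ρ : Fin (j+2) → G) : (Fin (j+2) → G) →₀ ℤ :=
  Finsupp.single ρ 1 - μ (j+1) (Finsupp.single ρ 1) - prev.H (bnd j (Finsupp.single ρ 1))

noncomputable def hdF (prev : HD X μ k j) (τ : Fin (j+2) → G) : (Fin (j+3) → G) →₀ ℤ :=
  if GoodS X k τ then lTranslate (τ 0) (j+2) (cne (j+1) (hdY X μ k j prev (nrm τ))) else 0

lemma hdF_smul (prev : HD X μ k j) (g : G) (τ : Fin (j+2) → G) :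
    hdF X μ k j prev (fun i => g * τ i) = lTranslate g (j+2) (hdF X μ k j prev τ) := by
  by_cases h : GoodS X k τ
  · rw [hdF, if_pos ((goodS_smul X k g τ).mpr h), hdF, if_pos h, nrm_smul, ← lT_lT]
  · rw [hdF, if_neg (fun hc => h ((goodS_smul X k g τ).mp hc)), hdF, if_neg h, map_zero]

noncomputable def hdStep (hX : Subgroup.closure (X : Set G) = ⊤) (prev : HD X μ k j) :
    HD X μ k (j+1) where
  H := Finsupp.lift _ ℤ _ (hdF X μ k j prev)
  equi := by
    intro g c
    have heq : (Finsupp.lift _ ℤ _ (hdF X μ k j prev)).comp (lTranslate g (j+1)) =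
        (lTranslate g (j+2)).comp (Finsupp.lift _ ℤ _ (hdF X μ k j prev)) := by
      refine lhom_ext1 fun τ => ?_
      rw [LinearMap.comp_apply, LinearMap.comp_apply, lT_single, lift_single, lift_single,
        one_smul, one_smul]
      exact hdF_smul X μ k j prev g τ
    exact LinearMap.congr_fun heq c
  l := ((rep_finite hX (j+1) k).toFinset).sup
    (fun τ => scaleOf X (cne (j+1) (hdY X μ k j prev (nrm τ))))
  scale := by
    intro c hc
    rw [VRChain_univ] at hc
    rw [← mem_vrSub]
    refine apply_mem_of_single _ _ _ fun σ hσ => ?_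
    rw [lift_single, one_smul, mem_vrSub, hdF, if_pos (hc σ hσ)]
    refine VRChain_lT _ (VRChain.mono (scaleOf_spec X _) ?_)
    have hmem : nrm σ ∈ (rep_finite hX (j+1) k).toFinset := by
      rw [Set.Finite.mem_toFinset]
      exact ⟨nrm_zero σ, (goodS_nrm X k σ).mpr (hc σ hσ)⟩
    have := Finset.le_sup (f := fun τ : Fin (j+2) → G =>
      scaleOf X (cne (j+1) (hdY X μ k j prev (nrm τ)))) hmem
    calc scaleOf X (cne (j+1) (hdY X μ k j prev (nrm σ)))
        = scaleOf X (cne (j+1) (hdY X μ k j prev (nrm (nrm σ)))) := by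
          rw [show nrm (nrm σ) = nrm σ from ?_]
          · funext i
            rw [nrm, nrm_zero]
            simp [nrm]
      _ ≤ _ := this
end HCV
set_option linter.unusedSectionVars false
set_option maxHeartbeats 1000000
namespace HCV

open Finsupp

variable {G : Type*} [Group G]

variable (X : Finset G) (μ : ∀ q : ℕ, ((Fin (q+1) → G) →₀ ℤ) →ₗ[ℤ] ((Fin (q+1) → G) →₀ ℤ))
  (k j : ℕ)

lemma hdStep_iden (hX : Subgroup.closure (X : Set G) = ⊤) (prev : HD X μ k j)
    (hequi1 : ∀ (g : G) (c), μ (j+1) (lTranslate g (j+1) c) = lTranslate g (j+1) (μ (j+1) c))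
    (hcomp : ∀ c : (Fin (j+2) → G) →₀ ℤ, bnd j (μ (j+1) c) = μ j (bnd j c))
    (hprev : Iden X μ k j prev.H) :
    Iden X μ k (j+1) (hdStep X μ k j hX prev).H := by
  intro z hz hred
  have hsingle : ∀ σ : Fin (j+2) → G, GoodS X k σ →
      bnd (j+1) ((hdStep X μ k j hX prev).H (Finsupp.single σ 1)) =
        ((LinearMap.id : ((Fin (j+2) → G) →₀ ℤ) →ₗ[ℤ] ((Fin (j+2) → G) →₀ ℤ)) - μ (j+1) - prev.H.comp (bnd j)) (Finsupp.single σ 1) := by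
    intro σ hσ
    have hH : (hdStep X μ k j hX prev).H (Finsupp.single σ 1) =
        lTranslate (σ 0) (j+2) (cne (j+1) (hdY X μ k j prev (nrm σ))) := by
      show (Finsupp.lift _ ℤ _ (hdF X μ k j prev)) (Finsupp.single σ 1) = _
      rw [lift_single, one_smul, hdF, if_pos hσ]
    have hw : bnd j (hdY X μ k j prev (nrm σ)) = 0 := by
      rw [hdY, map_sub, map_sub, hcomp]
      have hVR : VRChain X Set.univ j k (bnd j (Finsupp.single (nrm σ) 1)) :=
        VRChain_bnd (VRChain_single ((goodS_nrm X k σ).mpr hσ) 1)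
      rw [hprev _ hVR (isRedCycle_bnd j _)]
      abel
    have hkey : bnd (j+1) ((hdStep X μ k j hX prev).H (Finsupp.single σ 1)) =
        lTranslate (σ 0) (j+1) (hdY X μ k j prev (nrm σ)) := by
      rw [hH, bnd_lT, bnd_cne_succ, hw, map_zero, sub_zero]
    rw [hkey, hdY, map_sub, map_sub, lT_single, ← hequi1, lT_single, ← prev.equi, ← bnd_lT,
      lT_single, smul_nrm σ]
    simp only [LinearMap.sub_apply, LinearMap.id_apply, LinearMap.comp_apply]
  have hAB := apply_congr_support ((bnd (j+1)).comp (hdStep X μ k j hX prev).H)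
      ((LinearMap.id : ((Fin (j+2) → G) →₀ ℤ) →ₗ[ℤ] ((Fin (j+2) → G) →₀ ℤ)) - μ (j+1) - prev.H.comp (bnd j)) z (fun σ hσ => by
        rw [LinearMap.comp_apply]
        exact hsingle σ ((VRChain_univ X z).mp hz σ hσ))
  rw [LinearMap.comp_apply] at hAB
  rw [hAB]
  simp only [LinearMap.sub_apply, LinearMap.id_apply, LinearMap.comp_apply]
  rw [show bnd j z = 0 from hred, map_zero, sub_zero]

noncomputable def hSeq (hX : Subgroup.closure (X : Set G) = ⊤) : ∀ j, HD X μ k j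
  | 0 => hdBase X μ k
  | (j+1) => hdStep X μ k j hX (hSeq hX j)

lemma hSeq_iden (hX : Subgroup.closure (X : Set G) = ⊤) (m : ℕ)
    (haug : ∀ c : (Fin 1 → G) →₀ ℤ, aug (μ 0 c) = aug c)
    (hequi : ∀ q ≤ m, ∀ (g : G) (c), μ q (lTranslate g q c) = lTranslate g q (μ q c))
    (hcompat : ∀ q : ℕ, q + 1 ≤ m → ∀ c : (Fin (q + 2) → G) →₀ ℤ,
      bnd q (μ (q + 1) c) = μ q (bnd q c)) :
    ∀ j, j ≤ m → Iden X μ k j (hSeq X μ k hX j).H := by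
  intro j
  induction j with
  | zero =>
    intro _
    have e : hSeq X μ k hX 0 = hdBase X μ k := by rw [hSeq]
    rw [e]
    exact fun z _ _ => hdBase_iden X μ k haug (hequi 0 (Nat.zero_le m)) z
  | succ j ih =>
    intro hj
    have e : hSeq X μ k hX (j+1) = hdStep X μ k j hX (hSeq X μ k hX j) := by rw [hSeq]
    rw [e]
    exact hdStep_iden X μ k j hX _ (hequi (j+1) hj) (hcompat j hj)
      (ih (Nat.le_of_succ_le hj))

lemma endo_to_FP (hX : Subgroup.closure (X : Set G) = ⊤) (m : ℕ)
    (h : ∃ (K₀ : ℕ) (μ : ∀ q : ℕ, ((Fin (q + 1) → G) →₀ ℤ) →ₗ[ℤ] ((Fin (q + 1) → G) →₀ ℤ)),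
      (∀ q ≤ m, ∀ (g : G) (c), μ q (lTranslate g q c) = lTranslate g q (μ q c)) ∧
      (∀ c : (Fin 1 → G) →₀ ℤ, aug (μ 0 c) = aug c) ∧
      (∀ q : ℕ, q + 1 ≤ m → ∀ c : (Fin (q + 2) → G) →₀ ℤ,
        bnd q (μ (q + 1) c) = μ q (bnd q c)) ∧
      (∀ q ≤ m, ∀ c, VRChain X Set.univ q K₀ (μ q c))) :
    TypeFP X Set.univ m := by
  obtain ⟨K₀, μ, hequi, haug, hcompat, hscale⟩ := h
  intro q hq k
  refine ⟨max k (max ((hSeq X μ k hX q).l) K₀), le_max_left _ _, ?_⟩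
  rw [boundsAt_iff]
  intro z hz hred
  refine ⟨(hSeq X μ k hX q).H z + μ (q+1) (cne q z), ?_, ?_⟩
  · rw [← mem_vrSub]
    refine Submodule.add_mem _ ?_ ?_ <;> rw [mem_vrSub]
    · exact VRChain.mono ((hSeq X μ k hX q).scale z hz)
        (le_trans (le_max_left _ _) (le_max_right _ _))
    · exact VRChain.mono (hscale (q+1) hq _)
        (le_trans (le_max_right _ _) (le_max_right _ _))
  · rw [map_add,
      hSeq_iden X μ k hX m haug hequi hcompat q (Nat.le_of_lt hq) z hz hred,
      hcompat q hq (cne q z), bnd_cne_red hred]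
    abel

noncomputable def nvOf (m : ℕ) (h : TypeFP X Set.univ m) : ℕ → ℕ
  | 0 => 0
  | (q+1) => if hq : q < m then Classical.choose (h q hq (nvOf m h q)) else 0

lemma nvOf_spec (m : ℕ) (h : TypeFP X Set.univ m) (q : ℕ) (hq : q < m) :
    BoundsAt X Set.univ q (nvOf X m h q) (nvOf X m h (q+1)) := by
  have e : nvOf X m h (q+1) = Classical.choose (h q hq (nvOf X m h q)) := by
    rw [nvOf, dif_pos hq]
  rw [e]
  exact (Classical.choose_spec (h q hq (nvOf X m h q))).2

end HCV
/-- `G` is of type `FP_m` iff it admits a homological connecting vector of length `m`, iff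
there is a `ℤG`-chain endomorphism `μ` of `ℤ[G^{q+1}]` extending the identity on `ℤ` whose
image in degrees `q ≤ m` lies in `C_q^{K₀}(G)` for some `K₀`. -/
theorem stmt11 {G : Type*} [Group G] (X : Finset G)
    (hX : Subgroup.closure (X : Set G) = ⊤) (m : ℕ) :
    (TypeFP X Set.univ m ↔
      ∃ nv : ℕ → ℕ, ∀ q < m, BoundsAt X Set.univ q (nv q) (nv (q + 1))) ∧
    (TypeFP X Set.univ m ↔
      ∃ (K₀ : ℕ) (μ : ∀ q : ℕ, ((Fin (q + 1) → G) →₀ ℤ) →ₗ[ℤ] ((Fin (q + 1) → G) →₀ ℤ)),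
        (∀ q ≤ m, ∀ (g : G) (c), μ q (lTranslate g q c) = lTranslate g q (μ q c)) ∧
        (∀ c : (Fin 1 → G) →₀ ℤ, aug (μ 0 c) = aug c) ∧
        (∀ q : ℕ, q + 1 ≤ m → ∀ c : (Fin (q + 2) → G) →₀ ℤ,
          bnd q (μ (q + 1) c) = μ q (bnd q c)) ∧
        (∀ q ≤ m, ∀ c, VRChain X Set.univ q K₀ (μ q c))) := by
  
  constructor
  · constructor
    · intro h
      exact ⟨HCV.nvOf X m h, fun q hq => HCV.nvOf_spec X m h q hq⟩
    · rintro ⟨nv, hnv⟩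
      exact HCV.endo_to_FP X hX m (HCV.connvec_to_endo nv hnv)
  · constructor
    · intro h
      exact HCV.connvec_to_endo (HCV.nvOf X m h) (fun q hq => HCV.nvOf_spec X m h q hq)
    · exact HCV.endo_to_FP X hX m
end
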